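/- arXiv:math/0404431 — 3 statements merged into one kernel-verified Lean document; each statement's English description precedes it below -/
import Mathlib

section
/- Let p be a prime and let g ∈ ℤₚ[[T]] be a power series whose constant coefficient g(0) is nonzero. Set M = ℤₚ[[T]]/(g). Then multiplication by T on M is injective (i.e. M[T] = 0), the quotient M/TM is finite, and its cardinality equals p^{vₚ(g(0))}. -/
open PowerSeries

set_option maxHeartbeats 1000000
set_option synthInstance.maxHeartbeats 1000000

/-- If `g` has nonzero constant coefficient and `g ∣ X * f`, then `g ∣ f`. -/
lemma stmt0_aux_dvd (p : ℕ) [Fact p.Prime] (g f : PowerSeries ℤ_[p])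
    (hg : constantCoeff (R := ℤ_[p]) g ≠ 0) (hdvd : g ∣ X * f) : g ∣ f := by
  obtain ⟨h, hh⟩ := hdvd
  have h0 : constantCoeff (R := ℤ_[p]) h = 0 := by
    have := congrArg (constantCoeff (R := ℤ_[p])) hh
    simp only [map_mul, constantCoeff_X, zero_mul] at this
    rcases mul_eq_zero.mp this.symm with h1 | h1
    · exact absurd h1 hg
    · exact h1
  obtain ⟨h', rfl⟩ := X_dvd_iff.mpr h0
  refine ⟨h', mul_left_cancel₀ (X_ne_zero : (X : PowerSeries ℤ_[p]) ≠ 0) ?_⟩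
  rw [hh]; ring

/-- Let `p` be a prime and `g ∈ ℤₚ[[T]]` a power series with nonzero
constant coefficient `g(0)`.  Set `M = ℤₚ[[T]]/(g)`.  Then multiplication by `T` on `M`
is injective (i.e. `M[T] = 0`), the quotient `M/TM` is finite, and its cardinality is
`p ^ vₚ(g(0))`. -/
theorem stmt0 (p : ℕ) [Fact p.Prime] (g : PowerSeries ℤ_[p])
    (hg : constantCoeff (R := ℤ_[p]) g ≠ 0) :
    Function.Injective
      (fun m : PowerSeries ℤ_[p] ⧸ Ideal.span {g} => (X : PowerSeries ℤ_[p]) • m) ∧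
    Finite ((PowerSeries ℤ_[p] ⧸ Ideal.span {g}) ⧸
      LinearMap.range
        (LinearMap.lsmul (PowerSeries ℤ_[p]) (PowerSeries ℤ_[p] ⧸ Ideal.span {g}) X)) ∧
    Nat.card ((PowerSeries ℤ_[p] ⧸ Ideal.span {g}) ⧸
      LinearMap.range
        (LinearMap.lsmul (PowerSeries ℤ_[p]) (PowerSeries ℤ_[p] ⧸ Ideal.span {g}) X)) =
      p ^ (((constantCoeff (R := ℤ_[p]) g : ℤ_[p]) : ℚ_[p]).valuation).toNat := by
  have hsmul : ∀ f : PowerSeries ℤ_[p],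
      (X : PowerSeries ℤ_[p]) • (Ideal.Quotient.mk (Ideal.span {g}) f)
        = Ideal.Quotient.mk (Ideal.span {g}) (X * f) := fun _ => rfl
  -- Part 1 : injectivity
  have hinj : Function.Injective
      (fun m : PowerSeries ℤ_[p] ⧸ Ideal.span {g} => (X : PowerSeries ℤ_[p]) • m) := by
    intro m1 m2 h
    obtain ⟨f1, rfl⟩ := Ideal.Quotient.mk_surjective m1
    obtain ⟨f2, rfl⟩ := Ideal.Quotient.mk_surjective m2
    simp only [hsmul] at h
    rw [Ideal.Quotient.eq] at h ⊢
    rw [Ideal.mem_span_singleton] at h ⊢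
    rw [← mul_sub] at h
    exact stmt0_aux_dvd p g (f1 - f2) hg h
  set a := constantCoeff (R := ℤ_[p]) g with ha
  set n := ((a : ℚ_[p]).valuation).toNat with hn
  have hval : a.valuation = n := by
    rw [hn, PadicInt.valuation_coe, Int.toNat_natCast]
  have hgspec : a = (PadicInt.unitCoeff hg : ℤ_[p]) * (p : ℤ_[p]) ^ n := by
    rw [← hval]; exact PadicInt.unitCoeff_spec hg
  -- the ring hom to ZMod (p ^ n)
  set φ : PowerSeries ℤ_[p] →+* ZMod (p ^ n) :=
    (PadicInt.toZModPow n).comp (constantCoeff (R := ℤ_[p])) with hφ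
  have hpa : PadicInt.toZModPow n a = 0 := by
    have : a ∈ RingHom.ker (PadicInt.toZModPow n : ℤ_[p] →+* ZMod (p ^ n)) := by
      rw [PadicInt.ker_toZModPow, Ideal.mem_span_singleton]
      exact ⟨PadicInt.unitCoeff hg, by rw [mul_comm]; exact hgspec⟩
    exact this
  have hkerI : ∀ x ∈ Ideal.span {g}, φ x = 0 := by
    intro x hx
    rw [Ideal.mem_span_singleton] at hx
    obtain ⟨c, rfl⟩ := hx
    simp only [hφ, RingHom.comp_apply, map_mul, ← ha, hpa, zero_mul]
  set φ2 : (PowerSeries ℤ_[p] ⧸ Ideal.span {g}) →+* ZMod (p ^ n) :=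
    Ideal.Quotient.lift (Ideal.span {g}) φ hkerI with hφ2
  set N := LinearMap.range
    (LinearMap.lsmul (PowerSeries ℤ_[p]) (PowerSeries ℤ_[p] ⧸ Ideal.span {g}) X) with hN
  have hkerN : ∀ x ∈ N.toAddSubgroup, φ2.toAddMonoidHom x = 0 := by
    intro x hx
    obtain ⟨m, rfl⟩ := hx
    obtain ⟨f, rfl⟩ := Ideal.Quotient.mk_surjective m
    show φ2 ((LinearMap.lsmul (PowerSeries ℤ_[p]) (PowerSeries ℤ_[p] ⧸ Ideal.span {g}) X)
      (Ideal.Quotient.mk (Ideal.span {g}) f)) = 0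
    rw [LinearMap.lsmul_apply, hsmul, hφ2, Ideal.Quotient.lift_mk]
    simp [hφ]
  set ψ : ((PowerSeries ℤ_[p] ⧸ Ideal.span {g}) ⧸ N) →+ ZMod (p ^ n) :=
    QuotientAddGroup.lift N.toAddSubgroup φ2.toAddMonoidHom hkerN with hψ
  have hψmk : ∀ f : PowerSeries ℤ_[p],
      ψ (Submodule.Quotient.mk (Ideal.Quotient.mk (Ideal.span {g}) f)) = φ f := fun _ => rfl
  -- injectivity of ψ
  have hψinj : Function.Injective ψ := by
    rw [injective_iff_map_eq_zero]
    intro x hx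
    obtain ⟨m, rfl⟩ := Submodule.Quotient.mk_surjective N x
    obtain ⟨f, rfl⟩ := Ideal.Quotient.mk_surjective m
    rw [hψmk] at hx
    have hf0 : ∃ c : ℤ_[p], constantCoeff (R := ℤ_[p]) f = (p : ℤ_[p]) ^ n * c := by
      have : constantCoeff (R := ℤ_[p]) f ∈
          RingHom.ker (PadicInt.toZModPow n : ℤ_[p] →+* ZMod (p ^ n)) := hx
      rw [PadicInt.ker_toZModPow, Ideal.mem_span_singleton] at this
      obtain ⟨c, hc⟩ := this
      exact ⟨c, hc⟩
    obtain ⟨c, hc⟩ := hf0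
    obtain ⟨d, hd⟩ : ∃ d : ℤ_[p], d = ((PadicInt.unitCoeff hg)⁻¹ : Units ℤ_[p]) * c := ⟨_, rfl⟩
    have had : a * d = constantCoeff (R := ℤ_[p]) f := by
      have hu : (PadicInt.unitCoeff hg : ℤ_[p]) * ((PadicInt.unitCoeff hg)⁻¹ : Units ℤ_[p]) = 1 :=
        Units.mul_inv _
      rw [hd, hc]
      linear_combination (((PadicInt.unitCoeff hg)⁻¹ : Units ℤ_[p]) * c : ℤ_[p]) * hgspec +
        ((p : ℤ_[p]) ^ n * c) * hu
    obtain ⟨w, hw⟩ : (X : PowerSeries ℤ_[p]) ∣ (g - C a) := by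
      rw [X_dvd_iff]; simp [ha]
    obtain ⟨h, hh⟩ : (X : PowerSeries ℤ_[p]) ∣ (f - C (constantCoeff (R := ℤ_[p]) f)) := by
      rw [X_dvd_iff]; simp
    have hf : f = g * C d + X * (h - w * C d) := by
      have h1 : f = C (constantCoeff (R := ℤ_[p]) f) + X * h := by
        rw [← hh]; ring
      have h2 : g = C a + X * w := by rw [← hw]; ring
      rw [h1, h2, ← had, map_mul]
      ring
    rw [show (0 : (PowerSeries ℤ_[p] ⧸ Ideal.span {g}) ⧸ N) = Submodule.Quotient.mk 0 from rfl,
      Submodule.Quotient.eq, sub_zero]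
    refine ⟨Ideal.Quotient.mk (Ideal.span {g}) (h - w * C d), ?_⟩
    rw [LinearMap.lsmul_apply, hsmul, Ideal.Quotient.eq, hf, Ideal.mem_span_singleton]
    exact ⟨-C d, by ring⟩
  -- surjectivity of ψ
  have hψsurj : Function.Surjective ψ := by
    intro y
    obtain ⟨m, hm⟩ := ZMod.intCast_surjective y
    refine ⟨Submodule.Quotient.mk (Ideal.Quotient.mk (Ideal.span {g}) (C (m : ℤ_[p]))), ?_⟩
    rw [hψmk, hφ]
    simp only [RingHom.comp_apply, constantCoeff_C]
    rw [map_intCast, hm]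
  have e : ((PowerSeries ℤ_[p] ⧸ Ideal.span {g}) ⧸ N) ≃ ZMod (p ^ n) :=
    Equiv.ofBijective ψ ⟨hψinj, hψsurj⟩
  haveI : NeZero (p ^ n) := ⟨pow_ne_zero n (Fact.out : p.Prime).ne_zero⟩
  refine ⟨hinj, Finite.of_equiv _ e.symm, ?_⟩
  rw [Nat.card_congr e, Nat.card_zmod]
end

section
/- Let p be a prime and let f ∈ ℤₚ[[T]] be a power series with f(0) ≠ 0. Set M = ℤₚ[[T]]/(Tf). Then the T-torsion submodule M[T] is the cyclic Λ-submodule generated by the class of f and is isomorphic to ℤₚ as a ℤₚ-module; the natural map ψ_M : M[T] → M/TM is injective; and its cokernel is finite of cardinality p^{vₚ(f(0))}. -/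
open PowerSeries

set_option maxHeartbeats 1000000
set_option synthInstance.maxHeartbeats 400000

section Aux
variable (p : ℕ) [Fact p.Prime] (f : PowerSeries ℤ_[p])
  (hf : constantCoeff (R := ℤ_[p]) f ≠ 0)

theorem aux_smul (g x : PowerSeries ℤ_[p]) :
    g • Ideal.Quotient.mk (Ideal.span {X * f}) x
      = Ideal.Quotient.mk (Ideal.span {X * f}) (g * x) := by
  rw [← Ideal.Quotient.mk_eq_mk, ← Ideal.Quotient.mk_eq_mk]
  exact (Submodule.Quotient.mk_smul _ g x).symm

theorem aux_memI (g : PowerSeries ℤ_[p]) :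
    Ideal.Quotient.mk (Ideal.span {X * f}) g = 0 ↔ X * f ∣ g := by
  rw [Ideal.Quotient.eq_zero_iff_mem, Ideal.mem_span_singleton]

theorem aux_part1 :
    Submodule.torsionBy (PowerSeries ℤ_[p]) (PowerSeries ℤ_[p] ⧸ Ideal.span {X * f}) X =
      Submodule.span (PowerSeries ℤ_[p]) {Ideal.Quotient.mk (Ideal.span {X * f}) f} := by
  apply le_antisymm
  · intro m hm
    obtain ⟨g, rfl⟩ := Ideal.Quotient.mk_surjective m
    rw [Submodule.mem_torsionBy_iff, aux_smul, aux_memI] at hm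
    obtain ⟨h, hh⟩ := hm
    have hg : g = h * f := mul_left_cancel₀ (X_ne_zero (R := ℤ_[p])) (by rw [hh]; ring)
    rw [Submodule.mem_span_singleton]
    exact ⟨h, by rw [aux_smul, hg, mul_comm]⟩
  · rw [Submodule.span_le, Set.singleton_subset_iff, SetLike.mem_coe,
      Submodule.mem_torsionBy_iff, aux_smul, aux_memI]

theorem aux_smulZ (a : ℤ_[p]) (x : PowerSeries ℤ_[p]) :
    a • Ideal.Quotient.mk (Ideal.span {X * f}) x
      = Ideal.Quotient.mk (Ideal.span {X * f}) (C (R := ℤ_[p]) a * x) := by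
  rw [← algebraMap_smul (PowerSeries ℤ_[p]) a, aux_smul]
  congr 2

theorem aux_torsmem (a : ℤ_[p]) :
    Ideal.Quotient.mk (Ideal.span {X * f}) (C (R := ℤ_[p]) a * f)
      ∈ Submodule.torsionBy (PowerSeries ℤ_[p]) (PowerSeries ℤ_[p] ⧸ Ideal.span {X * f}) X := by
  rw [Submodule.mem_torsionBy_iff, aux_smul, aux_memI]
  exact ⟨C (R := ℤ_[p]) a, by ring⟩

include hf in
theorem aux_Cinj (a : ℤ_[p])
    (ha : Ideal.Quotient.mk (Ideal.span {X * f}) (C (R := ℤ_[p]) a * f) = 0) : a = 0 := by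
  rw [aux_memI] at ha
  obtain ⟨h, hh⟩ := ha
  have hfne : f ≠ 0 := fun h0 => hf (h0 ▸ map_zero _)
  have hXa : (X : PowerSeries ℤ_[p]) ∣ C (R := ℤ_[p]) a := ⟨h, mul_right_cancel₀ hfne (by rw [hh]; ring)⟩
  simpa using X_dvd_iff.mp hXa

theorem aux_torsdesc (m : PowerSeries ℤ_[p] ⧸ Ideal.span {X * f}) :
    m ∈ Submodule.torsionBy (PowerSeries ℤ_[p]) (PowerSeries ℤ_[p] ⧸ Ideal.span {X * f}) X ↔
      ∃ a : ℤ_[p], Ideal.Quotient.mk (Ideal.span {X * f}) (C (R := ℤ_[p]) a * f) = m := by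
  rw [aux_part1, Submodule.mem_span_singleton]
  constructor
  · rintro ⟨g, rfl⟩
    refine ⟨constantCoeff (R := ℤ_[p]) g, ?_⟩
    rw [aux_smul]
    obtain ⟨h, hh⟩ : (X : PowerSeries ℤ_[p]) ∣ (g - C (R := ℤ_[p]) (constantCoeff (R := ℤ_[p]) g)) :=
      X_dvd_iff.mpr (by simp)
    have hz : Ideal.Quotient.mk (Ideal.span {X * f}) (C (R := ℤ_[p]) (constantCoeff (R := ℤ_[p]) g) * f)
        - Ideal.Quotient.mk (Ideal.span {X * f}) (g * f) = 0 := by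
      rw [← map_sub, aux_memI]
      refine ⟨-h, ?_⟩
      have h2 : C (R := ℤ_[p]) (constantCoeff (R := ℤ_[p]) g) - g = -(X * h) := by
        rw [← hh]; ring
      rw [show C (R := ℤ_[p]) (constantCoeff (R := ℤ_[p]) g) * f - g * f
          = (C (R := ℤ_[p]) (constantCoeff (R := ℤ_[p]) g) - g) * f from by ring, h2]
      ring
    exact sub_eq_zero.mp hz
  · rintro ⟨a, rfl⟩
    exact ⟨C (R := ℤ_[p]) a, by rw [aux_smul]⟩

include hf in
theorem aux_part2 : Nonempty
    ((Submodule.torsionBy (PowerSeries ℤ_[p])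
      (PowerSeries ℤ_[p] ⧸ Ideal.span {X * f}) X) ≃ₗ[ℤ_[p]] ℤ_[p]) := by
  let e'' : ℤ_[p] →ₗ[ℤ_[p]]
      (Submodule.torsionBy (PowerSeries ℤ_[p]) (PowerSeries ℤ_[p] ⧸ Ideal.span {X * f}) X) :=
    { toFun := fun a => ⟨Ideal.Quotient.mk (Ideal.span {X * f}) (C (R := ℤ_[p]) a * f), aux_torsmem p f a⟩
      map_add' := by
        intro a b
        apply Subtype.ext
        simp [map_add, add_mul]
      map_smul' := by
        intro a b
        apply Subtype.ext
        simp only [RingHom.id_apply, smul_eq_mul]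
        rw [Submodule.coe_smul_of_tower, aux_smulZ, ← mul_assoc, ← map_mul] }
  have hbij : Function.Bijective e'' := by
    constructor
    · intro a b hab
      have h1 : Ideal.Quotient.mk (Ideal.span {X * f}) (C (R := ℤ_[p]) a * f)
          = Ideal.Quotient.mk (Ideal.span {X * f}) (C (R := ℤ_[p]) b * f) := congrArg Subtype.val hab
      have h2 : Ideal.Quotient.mk (Ideal.span {X * f}) (C (R := ℤ_[p]) (a - b) * f) = 0 := by
        rw [map_sub, sub_mul, map_sub, h1, sub_self]
      have h3 := aux_Cinj p f hf _ h2
      exact sub_eq_zero.mp h3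
    · rintro ⟨m, hm⟩
      obtain ⟨a, ha⟩ := (aux_torsdesc p f m).mp hm
      exact ⟨a, Subtype.ext ha⟩
  exact ⟨(LinearEquiv.ofBijective e'' hbij).symm⟩

include hf in
theorem aux_part3 :
    Function.Injective
      ((LinearMap.range (LinearMap.lsmul (PowerSeries ℤ_[p])
          (PowerSeries ℤ_[p] ⧸ Ideal.span {X * f}) X)).mkQ ∘ₗ
        (Submodule.torsionBy (PowerSeries ℤ_[p])
          (PowerSeries ℤ_[p] ⧸ Ideal.span {X * f}) X).subtype) := by
  refine (injective_iff_map_eq_zero _).mpr ?_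
  rintro ⟨m, hm⟩ h0
  rw [Submodule.mk_eq_zero]
  have h0' : m ∈ LinearMap.range (LinearMap.lsmul (PowerSeries ℤ_[p])
      (PowerSeries ℤ_[p] ⧸ Ideal.span {X * f}) X) := by
    have : (LinearMap.range (LinearMap.lsmul (PowerSeries ℤ_[p])
        (PowerSeries ℤ_[p] ⧸ Ideal.span {X * f}) X)).mkQ m = 0 := h0
    rwa [Submodule.mkQ_apply, Submodule.Quotient.mk_eq_zero] at this
  obtain ⟨n, hn⟩ := h0'
  obtain ⟨g, rfl⟩ := Ideal.Quotient.mk_surjective n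
  rw [LinearMap.lsmul_apply, aux_smul] at hn
  rw [Submodule.mem_torsionBy_iff] at hm
  rw [← hn] at hm ⊢
  rw [aux_smul, aux_memI] at hm
  obtain ⟨h, hh⟩ := hm
  have hXg : X * g = f * h := mul_left_cancel₀ (X_ne_zero (R := ℤ_[p])) (by rw [hh]; ring)
  have hch : constantCoeff (R := ℤ_[p]) f * constantCoeff (R := ℤ_[p]) h = 0 := by
    have := congrArg (constantCoeff (R := ℤ_[p])) hXg
    simpa using this.symm
  have hh0 : constantCoeff (R := ℤ_[p]) h = 0 := by
    rcases mul_eq_zero.mp hch with h1 | h1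
    · exact absurd h1 hf
    · exact h1
  obtain ⟨k, hk⟩ := X_dvd_iff.mpr hh0
  rw [aux_memI]
  exact ⟨k, by rw [hXg, hk]; ring⟩

set_option maxHeartbeats 4000000

include hf in
theorem aux_coker :
    Nonempty
      ((((PowerSeries ℤ_[p] ⧸ Ideal.span {X * f}) ⧸
          LinearMap.range (LinearMap.lsmul (PowerSeries ℤ_[p])
            (PowerSeries ℤ_[p] ⧸ Ideal.span {X * f}) X)) ⧸
        LinearMap.range
          ((LinearMap.range (LinearMap.lsmul (PowerSeries ℤ_[p])
              (PowerSeries ℤ_[p] ⧸ Ideal.span {X * f}) X)).mkQ ∘ₗ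
            (Submodule.torsionBy (PowerSeries ℤ_[p])
              (PowerSeries ℤ_[p] ⧸ Ideal.span {X * f}) X).subtype)) ≃
        (ℤ_[p] ⧸ Ideal.span {constantCoeff (R := ℤ_[p]) f})) := by
  set TM := LinearMap.range (LinearMap.lsmul (PowerSeries ℤ_[p])
    (PowerSeries ℤ_[p] ⧸ Ideal.span {X * f}) X) with hTM
  set P := LinearMap.range
    (TM.mkQ ∘ₗ (Submodule.torsionBy (PowerSeries ℤ_[p])
      (PowerSeries ℤ_[p] ⧸ Ideal.span {X * f}) X).subtype) with hPdef
  let θ : ℤ_[p] →ₗ[ℤ_[p]] ((PowerSeries ℤ_[p] ⧸ Ideal.span {X * f}) ⧸ TM) :=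
    { toFun := fun a => TM.mkQ (Ideal.Quotient.mk (Ideal.span {X * f}) (C (R := ℤ_[p]) a))
      map_add' := fun a b => by simp [map_add]
      map_smul' := fun a b => by
        simp only [RingHom.id_apply, smul_eq_mul]
        rw [map_mul, ← aux_smulZ, LinearMap.map_smul_of_tower] }
  have hkey : ∀ g : PowerSeries ℤ_[p],
      TM.mkQ (Ideal.Quotient.mk (Ideal.span {X * f}) g) = θ (constantCoeff (R := ℤ_[p]) g) := by
    intro g
    obtain ⟨h, hh⟩ : (X : PowerSeries ℤ_[p]) ∣ (g - C (R := ℤ_[p]) (constantCoeff (R := ℤ_[p]) g)) :=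
      X_dvd_iff.mpr (by simp)
    have hmem : Ideal.Quotient.mk (Ideal.span {X * f}) g
        - Ideal.Quotient.mk (Ideal.span {X * f}) (C (R := ℤ_[p]) (constantCoeff (R := ℤ_[p]) g)) ∈ TM := by
      refine ⟨Ideal.Quotient.mk (Ideal.span {X * f}) h, ?_⟩
      rw [LinearMap.lsmul_apply, aux_smul, ← hh, map_sub]
    show TM.mkQ _ = TM.mkQ _
    rw [Submodule.mkQ_apply, Submodule.mkQ_apply, Submodule.Quotient.eq]
    exact hmem
  have hbij : Function.Bijective θ := by
    constructor
    · refine (injective_iff_map_eq_zero _).mpr ?_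
      intro a ha
      have ha' : Ideal.Quotient.mk (Ideal.span {X * f}) (C (R := ℤ_[p]) a) ∈ TM := by
        have : TM.mkQ (Ideal.Quotient.mk (Ideal.span {X * f}) (C (R := ℤ_[p]) a)) = 0 := ha
        rwa [Submodule.mkQ_apply, Submodule.Quotient.mk_eq_zero] at this
      obtain ⟨n, hn⟩ := ha'
      obtain ⟨g, rfl⟩ := Ideal.Quotient.mk_surjective n
      rw [LinearMap.lsmul_apply, aux_smul] at hn
      have : Ideal.Quotient.mk (Ideal.span {X * f}) (C (R := ℤ_[p]) a - X * g) = 0 := by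
        rw [map_sub, hn, sub_self]
      rw [aux_memI] at this
      obtain ⟨k, hk⟩ := this
      have : C (R := ℤ_[p]) a = X * g + X * f * k := by
        have := hk
        linear_combination this
      have := congrArg (constantCoeff (R := ℤ_[p])) this
      simpa using this
    · intro q
      obtain ⟨m, rfl⟩ := Submodule.mkQ_surjective TM q
      obtain ⟨g, rfl⟩ := Ideal.Quotient.mk_surjective m
      exact ⟨constantCoeff (R := ℤ_[p]) g, (hkey g).symm⟩
  have hP2 : Submodule.map (LinearEquiv.ofBijective θ hbij : ℤ_[p] →ₗ[ℤ_[p]] _)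
      (Ideal.span {constantCoeff (R := ℤ_[p]) f}) = P.restrictScalars ℤ_[p] := by
    ext x
    rw [Submodule.mem_map, Submodule.restrictScalars_mem]
    constructor
    · rintro ⟨a, haspan, rfl⟩
      obtain ⟨b, rfl⟩ := Ideal.mem_span_singleton'.mp haspan
      refine ⟨⟨Ideal.Quotient.mk (Ideal.span {X * f}) (C (R := ℤ_[p]) b * f), aux_torsmem p f b⟩, ?_⟩
      show TM.mkQ (Ideal.Quotient.mk (Ideal.span {X * f}) (C (R := ℤ_[p]) b * f)) = _
      rw [hkey]
      show θ _ = θ _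
      congr 1
      simp
    · rintro ⟨t, ht⟩
      obtain ⟨a, ha⟩ := (aux_torsdesc p f _).mp t.2
      refine ⟨a * constantCoeff (R := ℤ_[p]) f, Ideal.mem_span_singleton'.mpr ⟨a, rfl⟩, ?_⟩
      rw [← ht]
      show θ _ = TM.mkQ ↑t
      rw [← ha, hkey]
      congr 1
      simp
  exact ⟨((Submodule.Quotient.restrictScalarsEquiv ℤ_[p] P).symm.toEquiv).trans
    ((Submodule.Quotient.equiv (Ideal.span {constantCoeff (R := ℤ_[p]) f})
      (P.restrictScalars ℤ_[p]) (LinearEquiv.ofBijective θ hbij) hP2).symm.toEquiv)⟩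

include hf in
theorem aux_zmod :
    Nonempty ((ℤ_[p] ⧸ Ideal.span {constantCoeff (R := ℤ_[p]) f}) ≃
        ZMod (p ^ (constantCoeff (R := ℤ_[p]) f).valuation)) := by
  have hassoc : Associated ((p : ℤ_[p]) ^ (constantCoeff (R := ℤ_[p]) f).valuation)
      (constantCoeff (R := ℤ_[p]) f) :=
    ⟨PadicInt.unitCoeff hf, by rw [mul_comm]; exact (PadicInt.unitCoeff_spec hf).symm⟩
  have hspan : Ideal.span {constantCoeff (R := ℤ_[p]) f}
      = RingHom.ker (PadicInt.toZModPow (constantCoeff (R := ℤ_[p]) f).valuation) := by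
    rw [PadicInt.ker_toZModPow]
    exact (Ideal.span_singleton_eq_span_singleton.mpr hassoc).symm
  haveI : NeZero (p ^ (constantCoeff (R := ℤ_[p]) f).valuation) :=
    ⟨pow_ne_zero _ (Nat.Prime.ne_zero Fact.out)⟩
  have hsurj : Function.Surjective
      (PadicInt.toZModPow (p := p) (constantCoeff (R := ℤ_[p]) f).valuation) := by
    intro y
    exact ⟨(y.val : ℤ_[p]), by rw [map_natCast, ZMod.natCast_val, ZMod.cast_id]⟩
  exact ⟨((Ideal.quotEquivOfEq hspan).trans
    (RingHom.quotientKerEquivOfSurjective hsurj)).toEquiv⟩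

end Aux

/-- Let `p` be a prime and `f ∈ ℤₚ[[T]]` with `f(0) ≠ 0`.  Set
`M = ℤₚ[[T]]/(T·f)`.  Then the `T`-torsion submodule `M[T]` is the cyclic
`Λ`-submodule generated by the class of `f` and is isomorphic to `ℤₚ` as a
`ℤₚ`-module; the natural map `ψ_M : M[T] → M/TM` is injective; and its cokernel
is finite of cardinality `p ^ vₚ(f(0))`. -/
theorem stmt1 (p : ℕ) [Fact p.Prime] (f : PowerSeries ℤ_[p])
    (hf : constantCoeff (R := ℤ_[p]) f ≠ 0) :
    Submodule.torsionBy (PowerSeries ℤ_[p]) (PowerSeries ℤ_[p] ⧸ Ideal.span {X * f}) X =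
      Submodule.span (PowerSeries ℤ_[p]) {Ideal.Quotient.mk (Ideal.span {X * f}) f} ∧
    Nonempty
      ((Submodule.torsionBy (PowerSeries ℤ_[p])
        (PowerSeries ℤ_[p] ⧸ Ideal.span {X * f}) X) ≃ₗ[ℤ_[p]] ℤ_[p]) ∧
    Function.Injective
      ((LinearMap.range (LinearMap.lsmul (PowerSeries ℤ_[p])
          (PowerSeries ℤ_[p] ⧸ Ideal.span {X * f}) X)).mkQ ∘ₗ
        (Submodule.torsionBy (PowerSeries ℤ_[p])
          (PowerSeries ℤ_[p] ⧸ Ideal.span {X * f}) X).subtype) ∧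
    Finite
      (((PowerSeries ℤ_[p] ⧸ Ideal.span {X * f}) ⧸
          LinearMap.range (LinearMap.lsmul (PowerSeries ℤ_[p])
            (PowerSeries ℤ_[p] ⧸ Ideal.span {X * f}) X)) ⧸
        LinearMap.range
          ((LinearMap.range (LinearMap.lsmul (PowerSeries ℤ_[p])
              (PowerSeries ℤ_[p] ⧸ Ideal.span {X * f}) X)).mkQ ∘ₗ
            (Submodule.torsionBy (PowerSeries ℤ_[p])
              (PowerSeries ℤ_[p] ⧸ Ideal.span {X * f}) X).subtype)) ∧
    Nat.card
      (((PowerSeries ℤ_[p] ⧸ Ideal.span {X * f}) ⧸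
          LinearMap.range (LinearMap.lsmul (PowerSeries ℤ_[p])
            (PowerSeries ℤ_[p] ⧸ Ideal.span {X * f}) X)) ⧸
        LinearMap.range
          ((LinearMap.range (LinearMap.lsmul (PowerSeries ℤ_[p])
              (PowerSeries ℤ_[p] ⧸ Ideal.span {X * f}) X)).mkQ ∘ₗ
            (Submodule.torsionBy (PowerSeries ℤ_[p])
              (PowerSeries ℤ_[p] ⧸ Ideal.span {X * f}) X).subtype)) =
      p ^ (((constantCoeff (R := ℤ_[p]) f : ℤ_[p]) : ℚ_[p]).valuation).toNat := by
  obtain ⟨E⟩ := aux_coker p f hf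
  obtain ⟨Z⟩ := aux_zmod p f hf
  haveI : NeZero (p ^ (constantCoeff (R := ℤ_[p]) f).valuation) :=
    ⟨pow_ne_zero _ (Nat.Prime.ne_zero Fact.out)⟩
  have hnat : (((constantCoeff (R := ℤ_[p]) f : ℤ_[p]) : ℚ_[p]).valuation).toNat
      = (constantCoeff (R := ℤ_[p]) f).valuation := rfl
  refine ⟨aux_part1 p f, aux_part2 p f hf, aux_part3 p f hf, ?_, ?_⟩
  · exact Finite.of_equiv _ (E.trans Z).symm
  · rw [Nat.card_congr (E.trans Z), hnat, Nat.card_eq_fintype_card, ZMod.card]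
end

section
/- Let p be a prime and Λ = ℤₚ[[T]]. The sequence of Λ-modules 0 → Λ/(T) → Λ/(T²) → Λ/(T) → 0, in which the first map is induced by multiplication by T and the second map is induced by the identity of Λ, is a short exact sequence. For the two outer terms N = Λ/(T), the natural map ψ_N : N[T] → N/TN is bijective, whereas for the middle term M = Λ/(T²) the natural map ψ_M : M[T] → M/TM is the zero map and its cokernel M/TM ≅ ℤₚ is infinite. -/
open PowerSeries

set_option maxHeartbeats 1000000
set_option synthInstance.maxHeartbeats 400000

section Aux
variable (p : ℕ) [Fact p.Prime]

private abbrev Λp (p : ℕ) [Fact p.Prime] := PowerSeries ℤ_[p]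

lemma aux_mem_spanX {p : ℕ} [Fact p.Prime] {f : PowerSeries ℤ_[p]} :
    f ∈ Ideal.span {(X : PowerSeries ℤ_[p])} ↔ (X : PowerSeries ℤ_[p]) ∣ f :=
  Ideal.mem_span_singleton

lemma aux_mem_spanX2 {p : ℕ} [Fact p.Prime] {f : PowerSeries ℤ_[p]} :
    f ∈ Ideal.span {(X : PowerSeries ℤ_[p]) ^ 2} ↔ (X : PowerSeries ℤ_[p]) ^ 2 ∣ f :=
  Ideal.mem_span_singleton

end Aux

noncomputable def equivAux (p : ℕ) [Fact p.Prime] :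
    ℤ_[p] ≃ₗ[ℤ_[p]]
      ((PowerSeries ℤ_[p] ⧸ Ideal.span {(X : PowerSeries ℤ_[p]) ^ 2}) ⧸
        LinearMap.range (LinearMap.lsmul (PowerSeries ℤ_[p])
          (PowerSeries ℤ_[p] ⧸ Ideal.span {(X : PowerSeries ℤ_[p]) ^ 2}) X)) := by
  have hXne : (X : PowerSeries ℤ_[p]) ≠ 0 := X_ne_zero
  refine LinearEquiv.ofBijective
    ((LinearMap.restrictScalars ℤ_[p] (Submodule.mkQ _)) ∘ₗ
      (Algebra.linearMap ℤ_[p] (PowerSeries ℤ_[p] ⧸ Ideal.span {(X : PowerSeries ℤ_[p]) ^ 2})))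
    ⟨?_, ?_⟩
  · intro r s hrs
    simp only [LinearMap.comp_apply, Algebra.linearMap_apply, LinearMap.restrictScalars_apply,
      Submodule.mkQ_apply] at hrs
    rw [Submodule.Quotient.eq] at hrs
    obtain ⟨c, hc⟩ := hrs
    obtain ⟨g, rfl⟩ := Ideal.Quotient.mk_surjective (I := Ideal.span {(X : PowerSeries ℤ_[p]) ^ 2}) c
    have hc0 : Ideal.Quotient.mk (Ideal.span {(X : PowerSeries ℤ_[p]) ^ 2}) (X * g) =
        Ideal.Quotient.mk (Ideal.span {(X : PowerSeries ℤ_[p]) ^ 2}) (PowerSeries.C r) -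
          Ideal.Quotient.mk (Ideal.span {(X : PowerSeries ℤ_[p]) ^ 2}) (PowerSeries.C s) :=
      hc
    rw [← map_sub, ← map_sub] at hc0
    have hc' := Ideal.Quotient.eq.mp hc0
    have hdvd : (X : PowerSeries ℤ_[p]) ∣ PowerSeries.C (r - s) := by
      have h2 : (X : PowerSeries ℤ_[p]) ∣ X * g - PowerSeries.C (r - s) :=
        dvd_trans (dvd_pow_self (X : PowerSeries ℤ_[p]) two_ne_zero) (aux_mem_spanX2.mp hc')
      have h3 : (X : PowerSeries ℤ_[p]) ∣ X * g := Dvd.intro g rfl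
      have := dvd_sub h3 h2
      simpa using this
    rw [X_dvd_iff, constantCoeff_C, sub_eq_zero] at hdvd
    exact hdvd
  · intro q
    obtain ⟨c, rfl⟩ := Submodule.mkQ_surjective _ q
    obtain ⟨x, rfl⟩ := Ideal.Quotient.mk_surjective (I := Ideal.span {(X : PowerSeries ℤ_[p]) ^ 2}) c
    refine ⟨constantCoeff x, ?_⟩
    simp only [LinearMap.comp_apply, Algebra.linearMap_apply, LinearMap.restrictScalars_apply,
      Submodule.mkQ_apply]
    rw [Submodule.Quotient.eq]
    have hdvd : (X : PowerSeries ℤ_[p]) ∣ (PowerSeries.C (constantCoeff x) - x) := by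
      rw [X_dvd_iff, map_sub, constantCoeff_C, sub_self]
    obtain ⟨g, hg⟩ := hdvd
    refine ⟨Ideal.Quotient.mk (Ideal.span {(X : PowerSeries ℤ_[p]) ^ 2}) g, ?_⟩
    show Ideal.Quotient.mk (Ideal.span {(X : PowerSeries ℤ_[p]) ^ 2}) (X * g) = _
    rw [← hg, map_sub]
    rfl

/-- Venjakob's counterexample.  Let `p` be a prime and `Λ = ℤₚ[[T]]`.
The sequence of `Λ`-modules `0 → Λ/(T) → Λ/(T²) → Λ/(T) → 0`, where the first map is
induced by multiplication by `T` and the second by the identity of `Λ`, is a short exact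
sequence.  For the two outer terms `N = Λ/(T)` the natural map `ψ_N : N[T] → N/TN` is
bijective, whereas for the middle term `M = Λ/(T²)` the natural map `ψ_M : M[T] → M/TM`
is the zero map and its cokernel `M/TM ≅ ℤₚ` is infinite. -/
theorem stmt4 (p : ℕ) [Fact p.Prime]
    (φ₁ : (PowerSeries ℤ_[p] ⧸ Ideal.span {(X : PowerSeries ℤ_[p])}) →ₗ[PowerSeries ℤ_[p]]
      (PowerSeries ℤ_[p] ⧸ Ideal.span {(X : PowerSeries ℤ_[p]) ^ 2}))
    (hφ₁ : ∀ x : PowerSeries ℤ_[p],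
      φ₁ (Ideal.Quotient.mk (Ideal.span {(X : PowerSeries ℤ_[p])}) x) =
        Ideal.Quotient.mk (Ideal.span {(X : PowerSeries ℤ_[p]) ^ 2}) (X * x))
    (φ₂ : (PowerSeries ℤ_[p] ⧸ Ideal.span {(X : PowerSeries ℤ_[p]) ^ 2}) →ₗ[PowerSeries ℤ_[p]]
      (PowerSeries ℤ_[p] ⧸ Ideal.span {(X : PowerSeries ℤ_[p])}))
    (hφ₂ : ∀ x : PowerSeries ℤ_[p],
      φ₂ (Ideal.Quotient.mk (Ideal.span {(X : PowerSeries ℤ_[p]) ^ 2}) x) =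
        Ideal.Quotient.mk (Ideal.span {(X : PowerSeries ℤ_[p])}) x) :
    Function.Injective φ₁ ∧
    LinearMap.range φ₁ = LinearMap.ker φ₂ ∧
    Function.Surjective φ₂ ∧
    Function.Bijective
      ((LinearMap.range (LinearMap.lsmul (PowerSeries ℤ_[p])
          (PowerSeries ℤ_[p] ⧸ Ideal.span {(X : PowerSeries ℤ_[p])}) X)).mkQ ∘ₗ
        (Submodule.torsionBy (PowerSeries ℤ_[p])
          (PowerSeries ℤ_[p] ⧸ Ideal.span {(X : PowerSeries ℤ_[p])}) X).subtype) ∧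
    ((LinearMap.range (LinearMap.lsmul (PowerSeries ℤ_[p])
        (PowerSeries ℤ_[p] ⧸ Ideal.span {(X : PowerSeries ℤ_[p]) ^ 2}) X)).mkQ ∘ₗ
      (Submodule.torsionBy (PowerSeries ℤ_[p])
        (PowerSeries ℤ_[p] ⧸ Ideal.span {(X : PowerSeries ℤ_[p]) ^ 2}) X).subtype) = 0 ∧
    Nonempty
      (((PowerSeries ℤ_[p] ⧸ Ideal.span {(X : PowerSeries ℤ_[p]) ^ 2}) ⧸
          LinearMap.range (LinearMap.lsmul (PowerSeries ℤ_[p])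
            (PowerSeries ℤ_[p] ⧸ Ideal.span {(X : PowerSeries ℤ_[p]) ^ 2}) X))
        ≃ₗ[ℤ_[p]] ℤ_[p]) ∧
    Infinite
      ((PowerSeries ℤ_[p] ⧸ Ideal.span {(X : PowerSeries ℤ_[p]) ^ 2}) ⧸
        LinearMap.range (LinearMap.lsmul (PowerSeries ℤ_[p])
          (PowerSeries ℤ_[p] ⧸ Ideal.span {(X : PowerSeries ℤ_[p]) ^ 2}) X)) := by
  have hXne : (X : PowerSeries ℤ_[p]) ≠ 0 := X_ne_zero
  have mkI_surj := Ideal.Quotient.mk_surjective (I := Ideal.span {(X : PowerSeries ℤ_[p])})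
  have mkJ_surj := Ideal.Quotient.mk_surjective (I := Ideal.span {(X : PowerSeries ℤ_[p]) ^ 2})
  -- injectivity of φ₁
  have h1 : Function.Injective φ₁ := by
    intro a b hab
    obtain ⟨x, rfl⟩ := mkI_surj a
    obtain ⟨y, rfl⟩ := mkI_surj b
    rw [hφ₁, hφ₁, Ideal.Quotient.eq, ← mul_sub, aux_mem_spanX2, pow_two,
      mul_dvd_mul_iff_left hXne] at hab
    rw [Ideal.Quotient.eq]
    exact aux_mem_spanX.2 hab
  refine ⟨h1, ?_, ?_, ?_, ?_, ?_, ?_⟩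
  · -- exactness
    ext a
    constructor
    · rintro ⟨b, rfl⟩
      obtain ⟨x, rfl⟩ := mkI_surj b
      rw [LinearMap.mem_ker, hφ₁, hφ₂, Ideal.Quotient.eq_zero_iff_mem, aux_mem_spanX]
      exact Dvd.intro x rfl
    · intro ha
      obtain ⟨x, rfl⟩ := mkJ_surj a
      rw [LinearMap.mem_ker, hφ₂, Ideal.Quotient.eq_zero_iff_mem, aux_mem_spanX] at ha
      obtain ⟨y, rfl⟩ := ha
      exact ⟨Ideal.Quotient.mk (Ideal.span {(X : PowerSeries ℤ_[p])}) y, hφ₁ y⟩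
  · -- surjectivity of φ₂
    intro a
    obtain ⟨x, rfl⟩ := mkI_surj a
    exact ⟨Ideal.Quotient.mk (Ideal.span {(X : PowerSeries ℤ_[p]) ^ 2}) x, hφ₂ x⟩
  · -- ψ_N bijective
    constructor
    · intro a b hab
      apply Subtype.ext
      have hbot : LinearMap.range (LinearMap.lsmul (PowerSeries ℤ_[p])
          (PowerSeries ℤ_[p] ⧸ Ideal.span {(X : PowerSeries ℤ_[p])}) X) = ⊥ := by
        rw [eq_bot_iff]
        rintro _ ⟨c, rfl⟩
        obtain ⟨x, rfl⟩ := mkI_surj c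
        have : (X : PowerSeries ℤ_[p]) • Ideal.Quotient.mk (Ideal.span {(X : PowerSeries ℤ_[p])}) x =
            Ideal.Quotient.mk (Ideal.span {(X : PowerSeries ℤ_[p])}) (X * x) := rfl
        simp only [LinearMap.lsmul_apply, this, Submodule.mem_bot,
          Ideal.Quotient.eq_zero_iff_mem]
        exact aux_mem_spanX.2 (Dvd.intro x rfl)
      have h := hab
      simp only [LinearMap.comp_apply, Submodule.subtype_apply] at h
      have : (a : PowerSeries ℤ_[p] ⧸ Ideal.span {(X : PowerSeries ℤ_[p])}) - b ∈ LinearMap.range (LinearMap.lsmul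
          (PowerSeries ℤ_[p]) (PowerSeries ℤ_[p] ⧸ Ideal.span {(X : PowerSeries ℤ_[p])}) X) := by
        exact (Submodule.Quotient.eq _).mp h
      rw [hbot, Submodule.mem_bot, sub_eq_zero] at this
      exact this
    · intro q
      obtain ⟨c, rfl⟩ := Submodule.mkQ_surjective _ q
      obtain ⟨x, rfl⟩ := mkI_surj c
      have htor : Ideal.Quotient.mk (Ideal.span {(X : PowerSeries ℤ_[p])}) x ∈ Submodule.torsionBy (PowerSeries ℤ_[p])
          (PowerSeries ℤ_[p] ⧸ Ideal.span {(X : PowerSeries ℤ_[p])}) X := by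
        rw [Submodule.mem_torsionBy_iff]
        show Ideal.Quotient.mk (Ideal.span {(X : PowerSeries ℤ_[p])}) (X * x) = 0
        rw [Ideal.Quotient.eq_zero_iff_mem]
        exact aux_mem_spanX.2 (Dvd.intro x rfl)
      exact ⟨⟨_, htor⟩, rfl⟩
  · -- ψ_M = 0
    apply LinearMap.ext
    rintro ⟨m, hm⟩
    obtain ⟨x, rfl⟩ := mkJ_surj m
    rw [Submodule.mem_torsionBy_iff] at hm
    have hm' : Ideal.Quotient.mk (Ideal.span {(X : PowerSeries ℤ_[p]) ^ 2}) (X * x) = 0 := hm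
    rw [Ideal.Quotient.eq_zero_iff_mem, aux_mem_spanX2, pow_two,
      mul_dvd_mul_iff_left hXne] at hm'
    obtain ⟨y, rfl⟩ := hm'
    simp only [LinearMap.comp_apply, Submodule.subtype_apply, LinearMap.zero_apply,
      Submodule.mkQ_apply, Submodule.Quotient.mk_eq_zero]
    exact ⟨Ideal.Quotient.mk (Ideal.span {(X : PowerSeries ℤ_[p]) ^ 2}) y, rfl⟩
  · -- cokernel ≅ ℤ_[p]
    exact ⟨(equivAux p).symm⟩
  · exact Equiv.infinite_iff (equivAux p).toEquiv |>.mp inferInstance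
end
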